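/- Let C be the middle-thirds Cantor set, μ its natural measure, π : {1,2}^ℕ → C the coding map with 1 ↦ left, 2 ↦ right, and Γ_n(𝚒) the number of consecutive 2's appearing after position n in 𝚒. Then for every 𝚒 ∈ {1,2}^ℕ, n ∈ ℕ, and x = π(𝚒), μ([x, x + 3^{-n}]) ≤ 2^{-Γ_n(𝚒)} · μ([x - 3^{-n}, x + 3^{-n}]). -/

import Mathlib

open Set MeasureTheory Filter
open scoped ENNReal Topology

/-- The coding map `π : {1,2}^ℕ → C` of the middle-thirds Cantor set, where the
symbol `1` (coded by `0 : Fin 2`) means "left" and the symbol `2` (coded by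
`1 : Fin 2`) means "right". -/
noncomputable def cantorPi (i : ℕ → Fin 2) : ℝ :=
  ∑' k : ℕ, (if i k = 1 then (2:ℝ) else 0) / 3 ^ (k + 1)

/-!
Zooming in by a factor `3` around `x = π(𝚒)` halves the measure: by self-similarity
`μ([x, x + t/3]) = ½ μ([y, y + t])` with `y = π(σ𝚒)`, because the other first-level
preimage of `[x, x + t/3]` lies in `(-∞, 0]` or `[1, ∞)`, which are `μ`-null. Hence
`μ([x, x + 3⁻ⁿ]) ≤ 2⁻ⁿ μ([y, y + 1])` with `y = π(σⁿ𝚒)`, and a run of `k` symbols `2`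
forces `μ([y, y + 1]) ≤ 2⁻ᵏ`, since then `[y, y + 1]` meets the support only inside the
level-`k` cylinder of `y`. Symmetrically `μ([x - 3⁻ⁿ, x + 3⁻ⁿ]) ≥ 2⁻ⁿ μ([0, 1]) = 2⁻ⁿ`.
-/

lemma ENNReal.le_of_eq_inv_two_mul_add {a b c : ℝ≥0∞} (ha : a ≠ ∞)
    (h : a = 2⁻¹ * b + 2⁻¹ * c) (hc : c ≤ a) : a ≤ b := by
  refine (ENNReal.add_le_add_iff_right ha).1 ?_
  calc a + a = (2⁻¹ + 2⁻¹) * (b + c) := by rw [h]; ring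
    _ = b + c := by rw [ENNReal.inv_two_add_inv_two, one_mul]
    _ ≤ b + a := by gcongr

lemma Antitone.measure_eq_zero_of_iInter_eq_empty {α : Type*} [MeasurableSpace α]
    {μ : Measure α} [IsFiniteMeasure μ] {s : ℕ → Set α} (hs : Antitone s)
    (hmeas : ∀ m, MeasurableSet (s m)) (hempty : ⋂ m, s m = ∅) (hμs : Monotone (μ ∘ s)) :
    μ (s 0) = 0 := by
  rw [← nonpos_iff_eq_zero, ← measure_empty (μ := μ), ← hempty,
    hs.measure_iInter (fun m => (hmeas m).nullMeasurableSet) ⟨0, measure_ne_top μ _⟩]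
  exact le_iInf fun m => hμs (Nat.zero_le m)

lemma cantorPi_summand_le (i : ℕ → Fin 2) (k : ℕ) :
    (if i k = 1 then (2:ℝ) else 0) / 3 ^ (k + 1) ≤ 2 / 3 * (1 / 3) ^ k := by
  calc (if i k = 1 then (2:ℝ) else 0) / 3 ^ (k + 1) ≤ 2 / 3 ^ (k + 1) := by
        gcongr; split <;> norm_num
    _ = 2 / 3 * (1 / 3) ^ k := by rw [pow_succ, one_div_pow]; field_simp

lemma summable_cantorPi (i : ℕ → Fin 2) :
    Summable fun k : ℕ => (if i k = 1 then (2:ℝ) else 0) / 3 ^ (k + 1) :=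
  .of_nonneg_of_le (fun _ => by positivity) (cantorPi_summand_le i)
    ((summable_geometric_of_lt_one (by norm_num) (by norm_num)).mul_left _)

lemma cantorPi_nonneg (i : ℕ → Fin 2) : 0 ≤ cantorPi i :=
  tsum_nonneg fun _ => by positivity

lemma cantorPi_le_one (i : ℕ → Fin 2) : cantorPi i ≤ 1 := by
  calc cantorPi i ≤ ∑' k : ℕ, 2 / 3 * (1 / 3 : ℝ) ^ k :=
        (summable_cantorPi i).tsum_le_tsum (cantorPi_summand_le i)
          ((summable_geometric_of_lt_one (by norm_num) (by norm_num)).mul_left _)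
    _ = 1 := by
        rw [tsum_mul_left, tsum_geometric_of_lt_one (by norm_num) (by norm_num)]
        norm_num

lemma cantorPi_eq_head_add_tail (i : ℕ → Fin 2) :
    cantorPi i = (if i 0 = 1 then (2:ℝ) else 0) / 3 + cantorPi (fun k => i (k + 1)) / 3 := by
  rw [cantorPi, (summable_cantorPi i).tsum_eq_zero_add, cantorPi, ← tsum_div_const]
  simp only [zero_add, pow_one, div_div, ← pow_succ]

lemma cantorPi_of_head_ne_one {i : ℕ → Fin 2} (h : i 0 ≠ 1) :
    cantorPi i = cantorPi (fun k => i (k + 1)) / 3 := by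
  simp [cantorPi_eq_head_add_tail i, h]

lemma cantorPi_of_head_eq_one {i : ℕ → Fin 2} (h : i 0 = 1) :
    cantorPi i = cantorPi (fun k => i (k + 1)) / 3 + 2 / 3 := by
  rw [cantorPi_eq_head_add_tail i, if_pos h]; ring

def IsCantorSelfSimilar (μ : Measure ℝ) : Prop :=
  μ = (2:ℝ≥0∞)⁻¹ • Measure.map (fun x : ℝ => x / 3) μ
    + (2:ℝ≥0∞)⁻¹ • Measure.map (fun x : ℝ => x / 3 + 2 / 3) μ

namespace IsCantorSelfSimilar

variable {μ : Measure ℝ} (hμ : IsCantorSelfSimilar μ)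
include hμ

lemma apply {A : Set ℝ} (hA : MeasurableSet A) :
    μ A = 2⁻¹ * μ ((fun x => x / 3) ⁻¹' A) + 2⁻¹ * μ ((fun x => x / 3 + 2 / 3) ⁻¹' A) := by
  conv_lhs => rw [show μ = _ from hμ]
  rw [Measure.add_apply, Measure.smul_apply, Measure.smul_apply,
    Measure.map_apply (by fun_prop) hA, Measure.map_apply (by fun_prop) hA,
    smul_eq_mul, smul_eq_mul]

lemma apply_Icc (a b : ℝ) :
    μ (Icc a b) = 2⁻¹ * μ (Icc (3 * a) (3 * b)) + 2⁻¹ * μ (Icc (3 * a - 2) (3 * b - 2)) := by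
  rw [hμ.apply measurableSet_Icc]
  congr 3 <;> ext x <;> simp only [mem_preimage, mem_Icc] <;> constructor <;>
    rintro ⟨_, _⟩ <;> constructor <;> linarith

lemma apply_Ici (a : ℝ) :
    μ (Ici a) = 2⁻¹ * μ (Ici (3 * a)) + 2⁻¹ * μ (Ici (3 * a - 2)) := by
  rw [hμ.apply measurableSet_Ici]
  congr 3 <;> ext x <;> simp only [mem_preimage, mem_Ici] <;> constructor <;> intro <;> linarith

lemma apply_Iic (a : ℝ) :
    μ (Iic a) = 2⁻¹ * μ (Iic (3 * a)) + 2⁻¹ * μ (Iic (3 * a - 2)) := by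
  rw [hμ.apply measurableSet_Iic]
  congr 3 <;> ext x <;> simp only [mem_preimage, mem_Iic] <;> constructor <;> intro <;> linarith

section Finite

variable [IsFiniteMeasure μ]

lemma measure_Ici_le_measure_Ici_three_mul {c : ℝ} (hc : 1 ≤ c) :
    μ (Ici c) ≤ μ (Ici (3 * c)) :=
  ENNReal.le_of_eq_inv_two_mul_add (measure_ne_top μ _) (hμ.apply_Ici c)
    (measure_mono (Ici_subset_Ici.2 (by linarith)))

lemma measure_Iic_le_measure_Iic_three_mul_sub_two {c : ℝ} (hc : c ≤ 0) :
    μ (Iic c) ≤ μ (Iic (3 * c - 2)) :=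
  ENNReal.le_of_eq_inv_two_mul_add (measure_ne_top μ _) ((hμ.apply_Iic c).trans (add_comm _ _))
    (measure_mono (Iic_subset_Iic.2 (by linarith)))

lemma measure_Ici_one : μ (Ici 1) = 0 := by
  have hs : Antitone fun m : ℕ => Ici ((3:ℝ) ^ m) := fun a b hab =>
    Ici_subset_Ici.2 (pow_le_pow_right₀ (by norm_num) hab)
  have hempty : ⋂ m : ℕ, Ici ((3:ℝ) ^ m) = ∅ := by
    refine eq_empty_of_forall_notMem fun x hx => ?_
    obtain ⟨m, hm⟩ := pow_unbounded_of_one_lt x (by norm_num : (1:ℝ) < 3)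
    exact hm.not_ge (mem_iInter.1 hx m)
  simpa using hs.measure_eq_zero_of_iInter_eq_empty (fun _ => measurableSet_Ici) hempty
    (monotone_nat_of_le_succ fun m => by
      simpa [pow_succ'] using hμ.measure_Ici_le_measure_Ici_three_mul (one_le_pow₀ (by norm_num)))

lemma measure_Iic_zero : μ (Iic 0) = 0 := by
  have hs : Antitone fun m : ℕ => Iic (1 - (3:ℝ) ^ m) := fun a b hab =>
    Iic_subset_Iic.2 (by gcongr; norm_num)
  have hempty : ⋂ m : ℕ, Iic (1 - (3:ℝ) ^ m) = ∅ := by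
    refine eq_empty_of_forall_notMem fun x hx => ?_
    obtain ⟨m, hm⟩ := pow_unbounded_of_one_lt (1 - x) (by norm_num : (1:ℝ) < 3)
    linarith [mem_Iic.1 (mem_iInter.1 hx m)]
  have hstep (m : ℕ) : 3 * (1 - (3:ℝ) ^ m) - 2 = 1 - 3 ^ (m + 1) := by ring
  simpa using hs.measure_eq_zero_of_iInter_eq_empty (fun _ => measurableSet_Iic) hempty
    (monotone_nat_of_le_succ fun m => by
      simpa [hstep] using hμ.measure_Iic_le_measure_Iic_three_mul_sub_two
        (sub_nonpos.2 (one_le_pow₀ (by norm_num : (1:ℝ) ≤ 3))))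

lemma measure_Icc_le_of_one_le (a b : ℝ) {c : ℝ} (hc : 1 ≤ c) :
    μ (Icc a b) ≤ μ (Icc a c) := by
  calc μ (Icc a b) ≤ μ (Icc a c ∪ Ici 1) := measure_mono fun z hz => by
        rcases le_total z c with h | h
        exacts [Or.inl ⟨hz.1, h⟩, Or.inr (hc.trans h)]
    _ ≤ μ (Icc a c) + μ (Ici 1) := measure_union_le _ _
    _ = μ (Icc a c) := by rw [hμ.measure_Ici_one, add_zero]

lemma measure_Icc_div_three {a b : ℝ} (hb : b ≤ 2) :
    μ (Icc (a / 3) (b / 3)) = 2⁻¹ * μ (Icc a b) := by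
  have hnull : μ (Icc (3 * (a / 3) - 2) (3 * (b / 3) - 2)) = 0 :=
    measure_mono_null (fun z hz => by simp only [mem_Iic]; linarith [hz.2]) hμ.measure_Iic_zero
  rw [hμ.apply_Icc, hnull, mul_zero, add_zero]
  congr 3 <;> ring

lemma measure_Icc_div_three_add_two_thirds {a b : ℝ} (ha : -1 ≤ a) :
    μ (Icc (a / 3 + 2 / 3) (b / 3 + 2 / 3)) = 2⁻¹ * μ (Icc a b) := by
  have hnull : μ (Icc (3 * (a / 3 + 2 / 3)) (3 * (b / 3 + 2 / 3))) = 0 :=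
    measure_mono_null (fun z hz => by simp only [mem_Ici]; linarith [hz.1]) hμ.measure_Ici_one
  rw [hμ.apply_Icc, hnull, mul_zero, zero_add]
  congr 3 <;> ring

lemma measure_Icc_cantorPi_add_div_three (i : ℕ → Fin 2) {t : ℝ} (ht : t ≤ 1) :
    μ (Icc (cantorPi i) (cantorPi i + t / 3))
      = 2⁻¹ * μ (Icc (cantorPi (fun k => i (k + 1))) (cantorPi (fun k => i (k + 1)) + t)) := by
  have hy0 := cantorPi_nonneg (fun k => i (k + 1))
  have hy1 := cantorPi_le_one (fun k => i (k + 1))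
  by_cases h : i 0 = 1
  · rw [cantorPi_of_head_eq_one h,
      ← hμ.measure_Icc_div_three_add_two_thirds (by linarith)]
    congr 2; ring
  · rw [cantorPi_of_head_ne_one h, ← hμ.measure_Icc_div_three (by linarith)]
    congr 2; ring

end Finite

lemma inv_two_mul_le_measure_Icc_div_three (a b : ℝ) :
    2⁻¹ * μ (Icc a b) ≤ μ (Icc (a / 3) (b / 3)) := by
  rw [hμ.apply_Icc (a / 3)]
  calc 2⁻¹ * μ (Icc a b) = 2⁻¹ * μ (Icc (3 * (a / 3)) (3 * (b / 3))) := by congr 3 <;> ring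
    _ ≤ _ := le_self_add

lemma inv_two_mul_le_measure_Icc_div_three_add_two_thirds (a b : ℝ) :
    2⁻¹ * μ (Icc a b) ≤ μ (Icc (a / 3 + 2 / 3) (b / 3 + 2 / 3)) := by
  rw [hμ.apply_Icc (a / 3 + 2 / 3)]
  calc 2⁻¹ * μ (Icc a b)
        = 2⁻¹ * μ (Icc (3 * (a / 3 + 2 / 3) - 2) (3 * (b / 3 + 2 / 3) - 2)) := by
          congr 3 <;> ring
    _ ≤ _ := le_add_self

lemma inv_two_mul_le_measure_Icc_cantorPi_sub_add_div_three (i : ℕ → Fin 2) (t : ℝ) :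
    2⁻¹ * μ (Icc (cantorPi (fun k => i (k + 1)) - t) (cantorPi (fun k => i (k + 1)) + t))
      ≤ μ (Icc (cantorPi i - t / 3) (cantorPi i + t / 3)) := by
  by_cases h : i 0 = 1
  · convert hμ.inv_two_mul_le_measure_Icc_div_three_add_two_thirds _ _ using 3 <;>
      rw [cantorPi_of_head_eq_one h] <;> ring
  · convert hμ.inv_two_mul_le_measure_Icc_div_three _ _ using 3 <;>
      rw [cantorPi_of_head_ne_one h] <;> ring

section Probability

variable [IsProbabilityMeasure μ]

lemma measure_Icc_zero_one : μ (Icc 0 1) = 1 := by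
  refine (prob_compl_eq_zero_iff measurableSet_Icc).1 (measure_mono_null (fun z hz => ?_)
    (measure_union_null hμ.measure_Iic_zero hμ.measure_Ici_one))
  rcases le_total z 0 with h | h
  exacts [Or.inl h, Or.inr (not_lt.1 fun h' => hz ⟨h, h'.le⟩)]

lemma measure_Icc_cantorPi_add_one_le {i : ℕ → Fin 2} {k : ℕ} (hrun : ∀ j < k, i j = 1) :
    μ (Icc (cantorPi i) (cantorPi i + 1)) ≤ 2⁻¹ ^ k := by
  induction k generalizing i with
  | zero => simpa using prob_le_one
  | succ k ih =>
    have hx : 2 / 3 ≤ cantorPi i := by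
      rw [cantorPi_of_head_eq_one (hrun 0 k.succ_pos)]
      linarith [cantorPi_nonneg (fun k => i (k + 1))]
    calc μ (Icc (cantorPi i) (cantorPi i + 1)) ≤ μ (Icc (cantorPi i) (cantorPi i + 1 / 3)) :=
          hμ.measure_Icc_le_of_one_le _ _ (by linarith)
      _ = 2⁻¹ * μ (Icc (cantorPi (fun k => i (k + 1))) (cantorPi (fun k => i (k + 1)) + 1)) :=
          hμ.measure_Icc_cantorPi_add_div_three i le_rfl
      _ ≤ 2⁻¹ * 2⁻¹ ^ k := by
          gcongr
          exact ih fun j hj => hrun (j + 1) (by omega)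
      _ = 2⁻¹ ^ (k + 1) := (pow_succ' _ _).symm

lemma measure_Icc_cantorPi_add_le {i : ℕ → Fin 2} {n k : ℕ} (hrun : ∀ j < k, i (n + j) = 1) :
    μ (Icc (cantorPi i) (cantorPi i + 3⁻¹ ^ n)) ≤ 2⁻¹ ^ (n + k) := by
  induction n generalizing i with
  | zero => simpa using hμ.measure_Icc_cantorPi_add_one_le (by simpa using hrun)
  | succ n ih =>
    calc μ (Icc (cantorPi i) (cantorPi i + 3⁻¹ ^ (n + 1)))
        = 2⁻¹ * μ (Icc (cantorPi (fun k => i (k + 1)))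
            (cantorPi (fun k => i (k + 1)) + 3⁻¹ ^ n)) := by
          rw [pow_succ, ← div_eq_mul_inv]
          exact hμ.measure_Icc_cantorPi_add_div_three i (pow_le_one₀ (by norm_num) (by norm_num))
      _ ≤ 2⁻¹ * 2⁻¹ ^ (n + k) := by
          gcongr
          exact ih fun j hj => by simpa [add_right_comm] using hrun j hj
      _ = 2⁻¹ ^ (n + 1 + k) := by ring

lemma inv_two_pow_le_measure_Icc_cantorPi (i : ℕ → Fin 2) (n : ℕ) :
    2⁻¹ ^ n ≤ μ (Icc (cantorPi i - 3⁻¹ ^ n) (cantorPi i + 3⁻¹ ^ n)) := by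
  induction n generalizing i with
  | zero =>
    rw [pow_zero, ← hμ.measure_Icc_zero_one, pow_zero]
    exact measure_mono (Icc_subset_Icc (by linarith [cantorPi_le_one i])
      (by linarith [cantorPi_nonneg i]))
  | succ n ih =>
    calc (2⁻¹ : ℝ≥0∞) ^ (n + 1) = 2⁻¹ * 2⁻¹ ^ n := pow_succ' _ _
      _ ≤ 2⁻¹ * μ (Icc (cantorPi (fun k => i (k + 1)) - 3⁻¹ ^ n)
            (cantorPi (fun k => i (k + 1)) + 3⁻¹ ^ n)) := by gcongr; exact ih _
      _ ≤ μ (Icc (cantorPi i - 3⁻¹ ^ (n + 1)) (cantorPi i + 3⁻¹ ^ (n + 1))) := by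
          rw [pow_succ, ← div_eq_mul_inv]
          exact hμ.inv_two_mul_le_measure_Icc_cantorPi_sub_add_div_three i _

end Probability

end IsCantorSelfSimilar

theorem stmt_12 (μ : Measure ℝ) (hprob : IsProbabilityMeasure μ)
    (hself : μ = (2:ℝ≥0∞)⁻¹ • Measure.map (fun x : ℝ => x / 3) μ
        + (2:ℝ≥0∞)⁻¹ • Measure.map (fun x : ℝ => x / 3 + 2 / 3) μ)
    (i : ℕ → Fin 2) (n k : ℕ) (hrun : ∀ j < k, i (n + j) = 1) :
    μ (Icc (cantorPi i) (cantorPi i + (3:ℝ)⁻¹ ^ n))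
      ≤ ((2:ℝ≥0∞)⁻¹) ^ k *
        μ (Icc (cantorPi i - (3:ℝ)⁻¹ ^ n) (cantorPi i + (3:ℝ)⁻¹ ^ n)) := by
  have hμ : IsCantorSelfSimilar μ := hself
  calc μ (Icc (cantorPi i) (cantorPi i + (3:ℝ)⁻¹ ^ n)) ≤ 2⁻¹ ^ (n + k) :=
        hμ.measure_Icc_cantorPi_add_le hrun
    _ = 2⁻¹ ^ k * 2⁻¹ ^ n := by rw [pow_add, mul_comm]
    _ ≤ 2⁻¹ ^ k * μ (Icc (cantorPi i - (3:ℝ)⁻¹ ^ n) (cantorPi i + (3:ℝ)⁻¹ ^ n)) := by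
        gcongr
        exact hμ.inv_two_pow_le_measure_Icc_cantorPi i n
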